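/- arXiv:math/0004159 — 6 statements merged into one kernel-verified Lean document; each statement's English description precedes it below -/
import Mathlib

section
/- Let A be an abelian group that is 2-divisible (for every a ∈ A there exists b ∈ A with 2b = a), let n ≥ 1, and let Λ ⊆ ℤⁿ be the sublattice {v ∈ ℤⁿ : v₁ + ⋯ + vₙ is even}. Let e₁, …, eₙ be the standard basis of ℤⁿ (so 2eᵢ ∈ Λ). Then the group homomorphism φ : Aⁿ → A ⊗_ℤ Λ defined by φ(a₁,…,aₙ) = Σᵢ aᵢ ⊗ (2eᵢ) is surjective, and its kernel is exactly the subgroup {(τ₁,…,τₙ) ∈ Aⁿ : 2τᵢ = 0 for all i, and τ₁ + ⋯ + τₙ = 0}. -/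
open scoped TensorProduct

/-- The sublattice `Λ = {v ∈ ℤⁿ : v₁ + ⋯ + vₙ is even}` of `ℤⁿ`. -/
def sumEvenLattice (n : ℕ) : Submodule ℤ (Fin n → ℤ) where
  carrier := {v | Even (∑ i, v i)}
  add_mem' := by
    intro a b ha hb
    simpa [Finset.sum_add_distrib] using ha.add hb
  zero_mem' := by simp
  smul_mem' := by
    intro c v hv
    simpa [smul_eq_mul, ← Finset.mul_sum] using hv.mul_left c

/-- The element `2eᵢ` of the sum-even lattice, where `eᵢ` is the `i`-th standard basis
vector of `ℤⁿ`. -/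
def twoStdBasis (n : ℕ) (i : Fin n) : sumEvenLattice n :=
  ⟨fun j => if j = i then 2 else 0, by
    simp only [sumEvenLattice, Submodule.mem_mk, AddSubmonoid.mem_mk,
      AddSubsemigroup.mem_mk, Set.mem_setOf_eq, Finset.sum_ite_eq',
      Finset.mem_univ, if_true]
    exact ⟨1, by ring⟩⟩

/-!
Writing `2eᵢ` for the generators in the image, every `v ∈ Λ` satisfies `∑ᵢ vᵢ • 2eᵢ = 2v`, so
`a ⊗ v = b ⊗ 2v` lies in the image once `2b = a`. An element of the kernel is killed by every
functional `Λ → ℤ`: the coordinates give `2aᵢ = 0` and half the coordinate sum gives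
`∑ aᵢ = 0`. Conversely, `2eᵢ + 2eⱼ = 2(eᵢ + eⱼ)` with `eᵢ + eⱼ ∈ Λ`, so a 2-torsion `a`
satisfies `a ⊗ 2eᵢ = -(a ⊗ 2eⱼ)`, and the whole sum collapses to `-(∑ aᵢ) ⊗ 2eⱼ = 0`.
-/

theorem TensorProduct.sum_smul_eq_zero_of_sum_tmul_eq_zero {R M N ι : Type*} [CommSemiring R]
    [AddCommMonoid M] [Module R M] [AddCommMonoid N] [Module R N] {s : Finset ι} {m : ι → M}
    {x : ι → N} (h : ∑ i ∈ s, m i ⊗ₜ[R] x i = 0) (f : N →ₗ[R] R) :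
    ∑ i ∈ s, f (x i) • m i = 0 := by
  simpa using congrArg ((TensorProduct.rid R M).toLinearMap ∘ₗ f.lTensor M) h

namespace sumEvenLattice

variable {n : ℕ}

theorem mem_iff {v : Fin n → ℤ} : v ∈ sumEvenLattice n ↔ Even (∑ i, v i) := Iff.rfl

@[simp]
theorem coe_twoStdBasis (i : Fin n) : (twoStdBasis n i : Fin n → ℤ) = Pi.single i 2 := by
  ext j
  simp [twoStdBasis, Pi.single_apply]

theorem sum_smul_twoStdBasis (v : sumEvenLattice n) :
    ∑ i, (v : Fin n → ℤ) i • twoStdBasis n i = (2 : ℤ) • v := by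
  ext j
  simp [Pi.single_apply, mul_comm]

def stdBasisAdd (i j : Fin n) : sumEvenLattice n :=
  ⟨Pi.single i 1 + Pi.single j 1, by simp [mem_iff, Finset.sum_add_distrib]⟩

theorem twoStdBasis_add_twoStdBasis (i j : Fin n) :
    twoStdBasis n i + twoStdBasis n j = (2 : ℤ) • stdBasisAdd i j := by
  ext k
  simp only [Submodule.coe_add, coe_twoStdBasis, SetLike.val_smul, stdBasisAdd, Pi.add_apply,
    Pi.smul_apply, Pi.single_apply, smul_eq_mul]
  split_ifs <;> norm_num

def halfSum (n : ℕ) : sumEvenLattice n →ₗ[ℤ] ℤ where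
  toFun v := (∑ i, (v : Fin n → ℤ) i) / 2
  map_add' v w := by
    simp only [Submodule.coe_add, Pi.add_apply, Finset.sum_add_distrib]
    exact Int.add_ediv_of_dvd_left (even_iff_two_dvd.mp v.2)
  map_smul' c v := by
    simp only [SetLike.val_smul, Pi.smul_apply, smul_eq_mul, ← Finset.mul_sum, RingHom.id_apply]
    exact Int.mul_ediv_assoc c (even_iff_two_dvd.mp v.2)

@[simp]
theorem halfSum_twoStdBasis (i : Fin n) : halfSum n (twoStdBasis n i) = 1 := by
  simp [halfSum]

variable {A : Type*} [AddCommGroup A]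

theorem tmul_eq_sum_smul_tmul_twoStdBasis {a b : A} (hb : 2 • b = a) (v : sumEvenLattice n) :
    a ⊗ₜ[ℤ] v = ∑ i, ((v : Fin n → ℤ) i • b) ⊗ₜ[ℤ] twoStdBasis n i := by
  rw [← hb, ← ofNat_zsmul, TensorProduct.smul_tmul, ← sum_smul_twoStdBasis, TensorProduct.tmul_sum]
  simp only [TensorProduct.smul_tmul]

theorem sum_tmul_twoStdBasis_surjective (hdiv : ∀ a : A, ∃ b : A, 2 • b = a) :
    Function.Surjective fun a : Fin n → A ↦ ∑ i, a i ⊗ₜ[ℤ] twoStdBasis n i := by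
  intro t
  induction t using TensorProduct.induction_on with
  | zero => exact ⟨0, by simp⟩
  | tmul a v =>
    obtain ⟨b, hb⟩ := hdiv a
    exact ⟨_, (tmul_eq_sum_smul_tmul_twoStdBasis hb v).symm⟩
  | add x y hx hy =>
    obtain ⟨a, rfl⟩ := hx
    obtain ⟨b, rfl⟩ := hy
    exact ⟨a + b, by simp [TensorProduct.add_tmul, Finset.sum_add_distrib]⟩

theorem two_smul_eq_zero_of_sum_tmul_twoStdBasis_eq_zero {a : Fin n → A}
    (h : ∑ i, a i ⊗ₜ[ℤ] twoStdBasis n i = 0) (j : Fin n) : 2 • a j = 0 := by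
  simpa [Pi.single_apply, ofNat_zsmul] using
    TensorProduct.sum_smul_eq_zero_of_sum_tmul_eq_zero h
      (LinearMap.proj j ∘ₗ (sumEvenLattice n).subtype)

theorem sum_eq_zero_of_sum_tmul_twoStdBasis_eq_zero {a : Fin n → A}
    (h : ∑ i, a i ⊗ₜ[ℤ] twoStdBasis n i = 0) : ∑ i, a i = 0 := by
  simpa using TensorProduct.sum_smul_eq_zero_of_sum_tmul_eq_zero h (halfSum n)

theorem tmul_twoStdBasis_add_tmul_twoStdBasis {a : A} (ha : 2 • a = 0) (i j : Fin n) :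
    a ⊗ₜ[ℤ] twoStdBasis n i + a ⊗ₜ[ℤ] twoStdBasis n j = 0 := by
  rw [← TensorProduct.tmul_add, twoStdBasis_add_twoStdBasis, ← TensorProduct.smul_tmul,
    ofNat_zsmul, ha, TensorProduct.zero_tmul]

theorem sum_tmul_twoStdBasis_eq {a : Fin n → A} (ha : ∀ i, 2 • a i = 0) (j : Fin n) :
    ∑ i, a i ⊗ₜ[ℤ] twoStdBasis n i = -((∑ i, a i) ⊗ₜ[ℤ] twoStdBasis n j) := by
  rw [TensorProduct.sum_tmul, ← Finset.sum_neg_distrib]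
  exact Finset.sum_congr rfl fun i _ ↦
    eq_neg_of_add_eq_zero_left (tmul_twoStdBasis_add_tmul_twoStdBasis (ha i) i j)

end sumEvenLattice

theorem surjective_and_kernel_of_tensor_sumEvenLattice_general
    (A : Type*) [AddCommGroup A] (hdiv : ∀ a : A, ∃ b : A, 2 • b = a)
    (n : ℕ) :
    Function.Surjective
        (fun a : Fin n → A => ∑ i, a i ⊗ₜ[ℤ] (twoStdBasis n i)) ∧
      ∀ a : Fin n → A,
        (∑ i, a i ⊗ₜ[ℤ] (twoStdBasis n i)) = (0 : A ⊗[ℤ] (sumEvenLattice n)) ↔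
          ((∀ i, 2 • a i = 0) ∧ ∑ i, a i = 0) := by
  refine ⟨sumEvenLattice.sum_tmul_twoStdBasis_surjective hdiv, fun a ↦ ⟨fun h ↦ ?_, ?_⟩⟩
  · exact ⟨sumEvenLattice.two_smul_eq_zero_of_sum_tmul_twoStdBasis_eq_zero h,
      sumEvenLattice.sum_eq_zero_of_sum_tmul_twoStdBasis_eq_zero h⟩
  · rintro ⟨htors, hsum⟩
    cases n with
    | zero => simp
    | succ n =>
      rw [sumEvenLattice.sum_tmul_twoStdBasis_eq htors 0, hsum, TensorProduct.zero_tmul, neg_zero]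

/-- Let `A` be a 2-divisible abelian group, `n ≥ 1`, and
`Λ ⊆ ℤⁿ` the sum-even sublattice.  The homomorphism `φ : Aⁿ → A ⊗_ℤ Λ`,
`φ(a₁,…,aₙ) = Σᵢ aᵢ ⊗ (2eᵢ)`, is surjective, and its kernel is exactly the
subgroup of tuples of 2-torsion elements summing to zero. -/
theorem surjective_and_kernel_of_tensor_sumEvenLattice
    (A : Type*) [AddCommGroup A] (hdiv : ∀ a : A, ∃ b : A, 2 • b = a)
    (n : ℕ) (hn : 1 ≤ n) :
    Function.Surjective
        (fun a : Fin n → A => ∑ i, a i ⊗ₜ[ℤ] (twoStdBasis n i)) ∧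
      ∀ a : Fin n → A,
        (∑ i, a i ⊗ₜ[ℤ] (twoStdBasis n i)) = (0 : A ⊗[ℤ] (sumEvenLattice n)) ↔
          ((∀ i, 2 • a i = 0) ∧ ∑ i, a i = 0) :=
  surjective_and_kernel_of_tensor_sumEvenLattice_general A hdiv n
end

section
/- Let A be an abelian group. Let T = {(τ₁,τ₂,τ₃,τ₄) ∈ A⁴ : 2τᵢ = 0 for all i and τ₁+τ₂+τ₃+τ₄ = 0}, a subgroup of A⁴, and let Q = A⁴/T. Let W ⊆ S₄ ⋉ {±1}⁴ be the subgroup of signed permutations (σ,ε) with ε₁ε₂ε₃ε₄ = 1, acting on A⁴ by ((σ,ε)·x)_i = ε_i · x_{σ⁻¹(i)}; this action preserves T and hence descends to Q. Suppose τ₁, τ₂, τ₃ ∈ A are pairwise distinct, nonzero elements with 2τᵢ = 0 and τ₁+τ₂+τ₃ = 0, and suppose s₁, s₂, s₃ ∈ A satisfy 2sᵢ = τᵢ. Then the stabilizer in W of the class [p] ∈ Q of the point p = (0, s₁, s₂, s₃) ∈ A⁴ is exactly {(id,(1,1,1,1)), (id,(−1,−1,−1,−1))}, a group of order 2. -/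
/-- The subgroup `T = {(τ₁,…,τₙ) ∈ Aⁿ : 2τᵢ = 0 for all i, τ₁ + ⋯ + τₙ = 0}`
of tuples of 2-torsion elements summing to zero. -/
def torsionSumZero (A : Type*) [AddCommGroup A] (n : ℕ) : AddSubgroup (Fin n → A) where
  carrier := {x | (∀ i, 2 • x i = 0) ∧ ∑ i, x i = 0}
  add_mem' := by
    rintro a b ⟨ha1, ha2⟩ ⟨hb1, hb2⟩
    refine ⟨fun i => ?_, ?_⟩
    · simp [Pi.add_apply, smul_add, ha1 i, hb1 i]
    · simp [Finset.sum_add_distrib, ha2, hb2]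
  zero_mem' := by simp
  neg_mem' := by
    rintro a ⟨ha1, ha2⟩
    refine ⟨fun i => ?_, ?_⟩
    · simp [smul_neg, ha1 i]
    · simp [ha2]

/-- Let `A` be an abelian group, `T ⊆ A⁴` the subgroup of 4-tuples of
2-torsion elements summing to zero, and `Q = A⁴/T`.  The group of signed permutations
`(σ,ε) ∈ S₄ ⋉ {±1}⁴` with `ε₁ε₂ε₃ε₄ = 1` (the Weyl group of `D₄`) acts on `A⁴` by
`((σ,ε)·x)_i = ε_i • x_{σ⁻¹ i}`, preserving `T`, hence acts on `Q`.  If `τ₁,τ₂,τ₃` are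
pairwise distinct nonzero 2-torsion elements summing to zero and `2sᵢ = τᵢ`, then the
stabilizer of the class of `p = (0,s₁,s₂,s₃)` in `Q` is exactly
`{(id,(1,1,1,1)), (id,(−1,−1,−1,−1))}`. -/
theorem stabilizer_in_D4_weyl_of_halves
    (A : Type*) [AddCommGroup A] (τ s : Fin 3 → A)
    (hinj : Function.Injective τ) (hne : ∀ i, τ i ≠ 0)
    (htor : ∀ i, 2 • τ i = 0) (hsum : ∑ i, τ i = 0)
    (hs : ∀ i, 2 • s i = τ i)
    (p : Fin 4 → A) (hp : p = ![0, s 0, s 1, s 2])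
    (σ : Equiv.Perm (Fin 4)) (ε : Fin 4 → ℤˣ) (hε : ∏ i, ε i = 1) :
    ((QuotientAddGroup.mk (fun i => (ε i : ℤ) • p (σ⁻¹ i)) :
        (Fin 4 → A) ⧸ torsionSumZero A 4) = QuotientAddGroup.mk p) ↔
      (σ = 1 ∧ (ε = 1 ∨ ε = -1)) := by
  subst hp
  set p : Fin 4 → A := ![0, s 0, s 1, s 2] with hp
  set t : Fin 4 → A := ![0, τ 0, τ 1, τ 2] with htdef
  have ht2 : ∀ i, 2 • p i = t i := by
    intro i; fin_cases i <;> simp [hp, htdef, hs]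
  have httor : ∀ i, 2 • t i = 0 := by
    intro i; fin_cases i <;> simp [htdef, htor 0, htor 1, htor 2]
  have hneg : ∀ x : A, 2 • x = 0 → -x = x := fun x h =>
    neg_eq_of_add_eq_zero_left (by rwa [two_smul] at h)
  have hτne : ∀ i j : Fin 3, i ≠ j → τ i ≠ τ j := fun i j hij h => hij (hinj h)
  have tinj : Function.Injective t := by
    intro i j hij
    fin_cases i <;> fin_cases j <;>
      simp only [htdef, Matrix.cons_val_zero, Matrix.cons_val_one, Matrix.head_cons,
        Matrix.cons_val_two, Matrix.tail_cons, Matrix.cons_val_three, Fin.isValue] at hij ⊢ <;>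
      first
      | rfl
      | exact absurd hij.symm (hne _)
      | exact absurd hij (hne _)
      | exact absurd hij (hτne _ _ (by decide))
  have hunit : ∀ (u : ℤˣ) (x : A), 2 • x = 0 → (u : ℤ) • x = x := by
    intro u x h
    rcases Int.units_eq_one_or u with rfl | rfl
    · simp
    · simpa using hneg x h
  have hadd : ∀ i j : Fin 3, i ≠ j → τ i + τ j ≠ 0 := by
    intro i j hij h
    exact hτne i j hij (by rw [← hneg (τ j) (htor j)]; exact eq_neg_of_add_eq_zero_left h)
  have hss : ∀ i, s i + s i = τ i := fun i => by rw [← two_smul ℕ]; exact hs i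
  have hpt : ∀ i, p i + p i = t i := fun i => by rw [← two_smul ℕ]; exact ht2 i
  rw [QuotientAddGroup.eq]
  show ((∀ i, 2 • (-(fun i => (ε i : ℤ) • p (σ⁻¹ i)) + p) i = 0) ∧
      ∑ i, (-(fun i => (ε i : ℤ) • p (σ⁻¹ i)) + p) i = 0) ↔ _
  simp only [Pi.add_apply, Pi.neg_apply]
  constructor
  · rintro ⟨h2, hsum'⟩
    have hσi : ∀ i, σ⁻¹ i = i := by
      intro i
      apply tinj
      have h := h2 i
      rw [smul_add, smul_neg, smul_comm, ht2, ht2, hunit _ _ (httor _)] at h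
      exact neg_add_eq_zero.mp h
    have hσ : σ = 1 := by
      have h1 : σ⁻¹ = 1 := Equiv.ext hσi
      simpa using congrArg Inv.inv h1
    subst hσ
    refine ⟨rfl, ?_⟩
    simp only [inv_one, Equiv.Perm.coe_one, id_eq] at hsum'
    rw [Fin.sum_univ_four] at hsum'
    rcases Int.units_eq_one_or (ε 0) with h0 | h0 <;>
      rcases Int.units_eq_one_or (ε 1) with h1 | h1 <;>
      rcases Int.units_eq_one_or (ε 2) with h2' | h2' <;>
      rcases Int.units_eq_one_or (ε 3) with h3 | h3 <;>
      simp only [Fin.prod_univ_four, h0, h1, h2', h3, mul_one, one_mul, mul_neg, neg_mul,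
        neg_neg] at hε <;>
      simp only [h0, h1, h2', h3, Units.val_one, Units.val_neg, one_smul, neg_smul, neg_neg,
        neg_zero, hp, Matrix.cons_val_zero, Matrix.cons_val_one, Matrix.head_cons,
        Matrix.cons_val_two, Matrix.tail_cons, Matrix.cons_val_three, Fin.isValue, add_zero,
        zero_add, neg_add_cancel, hss] at hsum' <;>
      first
      | exact absurd hε (by decide)
      | (left; funext i; fin_cases i <;> assumption)
      | (right; funext i; fin_cases i <;> simp only [Pi.neg_apply, Pi.one_apply] <;> assumption)
      | exact absurd hsum' (hne _)
      | exact absurd hsum' (hadd _ _ (by decide))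
  · rintro ⟨rfl, h | h⟩ <;> subst h
    · refine ⟨fun i => ?_, ?_⟩ <;> simp
    · simp only [Pi.neg_apply, Pi.one_apply, Units.val_neg, Units.val_one, neg_smul, one_smul,
        neg_neg, inv_one, Equiv.Perm.coe_one, id_eq, hpt]
      refine ⟨httor, ?_⟩
      rw [Fin.sum_univ_four]
      rw [Fin.sum_univ_three] at hsum
      simp only [htdef, Matrix.cons_val_zero, Matrix.cons_val_one, Matrix.head_cons,
        Matrix.cons_val_two, Matrix.tail_cons, Matrix.cons_val_three, Fin.isValue, zero_add]
      exact hsum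
end

section
/- Let A be an abelian group. Let T = {(τ₁,τ₂,τ₃) ∈ A³ : 2τᵢ = 0 for all i and τ₁+τ₂+τ₃ = 0}, a subgroup of A³, and let Q = A³/T. Let W = S₃ ⋉ {±1}³ act on A³ by ((σ,ε)·x)_i = ε_i · x_{σ⁻¹(i)}; this action preserves T and hence descends to Q. Suppose τ₁, τ₂, τ₃ ∈ A are pairwise distinct, nonzero elements with 2τᵢ = 0 and τ₁+τ₂+τ₃ = 0, and suppose s₁, s₂, s₃ ∈ A satisfy 2sᵢ = τᵢ. Then the stabilizer in W of the class [p] ∈ Q of the point p = (s₁, s₂, s₃) ∈ A³ is exactly {(id,(1,1,1)), (id,(−1,−1,−1))}, a group of order 2. -/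
/-- Let `A` be an abelian group, `T ⊆ A³` the subgroup of triples of
2-torsion elements summing to zero, and `Q = A³/T`.  The full hyperoctahedral group
`W = S₃ ⋉ {±1}³` (the Weyl group of `B₃`) acts on `A³` by `((σ,ε)·x)_i = ε_i • x_{σ⁻¹ i}`,
preserving `T`, hence acts on `Q`.  If `τ₁,τ₂,τ₃` are pairwise distinct nonzero 2-torsion
elements summing to zero and `2sᵢ = τᵢ`, then the stabilizer of the class of
`p = (s₁,s₂,s₃)` in `Q` is exactly `{(id,(1,1,1)), (id,(−1,−1,−1))}`. -/
theorem stabilizer_in_B3_weyl_of_halves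
    (A : Type*) [AddCommGroup A] (τ s : Fin 3 → A)
    (hinj : Function.Injective τ) (hne : ∀ i, τ i ≠ 0)
    (htor : ∀ i, 2 • τ i = 0) (hsum : ∑ i, τ i = 0)
    (hs : ∀ i, 2 • s i = τ i)
    (p : Fin 3 → A) (hp : p = ![s 0, s 1, s 2])
    (σ : Equiv.Perm (Fin 3)) (ε : Fin 3 → ℤˣ) :
    ((QuotientAddGroup.mk (fun i => (ε i : ℤ) • p (σ⁻¹ i)) :
        (Fin 3 → A) ⧸ torsionSumZero A 3) = QuotientAddGroup.mk p) ↔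
      (σ = 1 ∧ (ε = 1 ∨ ε = -1)) := by

  have hps : ∀ i, p i = s i := by
    subst hp; intro i; fin_cases i <;> rfl
  have htt : ∀ i, -τ i = τ i := by
    intro i
    have h := htor i
    rw [two_nsmul] at h
    exact neg_eq_of_add_eq_zero_left h
  have hss : ∀ i, s i + s i = τ i := fun i => by rw [← two_nsmul]; exact hs i
  have hpair : ∀ i j, i ≠ j → τ i + τ j ≠ 0 := by
    intro i j hij h
    exact hij (hinj ((eq_neg_of_add_eq_zero_left h).trans (htt j)))
  rw [QuotientAddGroup.eq]
  constructor
  · rintro ⟨h1, h2⟩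
    have hτeq : ∀ i, τ (σ⁻¹ i) = τ i := by
      intro i
      have h := h1 i
      simp only [Pi.add_apply, Pi.neg_apply, hps] at h
      rcases Int.units_eq_one_or (ε i) with he | he <;>
        rw [he] at h <;>
        simp only [Units.val_one, Units.val_neg, one_smul, neg_smul, neg_neg] at h
      · rw [smul_add, smul_neg, hs, hs] at h
        exact (neg_add_eq_zero.mp h)
      · rw [smul_add, hs, hs] at h
        exact (eq_neg_of_add_eq_zero_left h).trans (htt i)
    have hσ : σ = 1 := by
      have hinv : σ⁻¹ = 1 := Equiv.ext fun i => hinj (hτeq i)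
      rwa [inv_eq_one] at hinv
    refine ⟨hσ, ?_⟩
    subst hσ
    simp only [inv_one, Equiv.Perm.one_apply, Pi.add_apply, Pi.neg_apply, hps,
      Fin.sum_univ_three] at h2
    rcases Int.units_eq_one_or (ε 0) with h0 | h0 <;>
      rcases Int.units_eq_one_or (ε 1) with hh1 | hh1 <;>
      rcases Int.units_eq_one_or (ε 2) with hh2 | hh2 <;>
      rw [h0, hh1, hh2] at h2 <;>
      simp only [Units.val_one, Units.val_neg, one_smul, neg_smul, neg_neg,
        neg_add_cancel, zero_add, add_zero, hss] at h2
    · left; funext i; fin_cases i <;> simp [h0, hh1, hh2]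
    · exact absurd h2 (hne 2)
    · exact absurd h2 (hne 1)
    · exact absurd h2 (hpair 1 2 (by decide))
    · exact absurd h2 (hne 0)
    · exact absurd h2 (hpair 0 2 (by decide))
    · exact absurd h2 (hpair 0 1 (by decide))
    · right; funext i; fin_cases i <;> simp [h0, hh1, hh2]
  · rintro ⟨rfl, rfl | rfl⟩
    · refine ⟨fun i => ?_, ?_⟩ <;>
        simp [Pi.add_apply, Pi.neg_apply]
    · refine ⟨fun i => ?_, ?_⟩
      · simp only [Pi.add_apply, Pi.neg_apply, Pi.one_apply, inv_one, Equiv.Perm.one_apply,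
          hps, Units.val_neg, Units.val_one, neg_smul, one_smul, neg_neg, hss]
        exact htor i
      · simp only [Pi.add_apply, Pi.neg_apply, Pi.one_apply, inv_one, Equiv.Perm.one_apply,
          hps, Units.val_neg, Units.val_one, neg_smul, one_smul, neg_neg, hss,
          Fin.sum_univ_three]
        simpa [Fin.sum_univ_three] using hsum
end

section
/- Let n ≥ 1 and let J be the standard symplectic 2n × 2n matrix (block form [[0, I],[−I, 0]]). Let M be a 2n × 2n complex matrix with Mᵀ · J · M = J, and suppose M has finite order, i.e. M^m = 1 for some m ≥ 1. For each root λ of the characteristic polynomial of M (all such roots are roots of unity), let α(λ) denote the unique real number with 0 ≤ α(λ) < 1 and λ = exp(2πi·α(λ)). Then the sum of α(λ) over the roots of the characteristic polynomial of M, counted with multiplicity, equals (2n − d)/2, where d is the dimension of the kernel of M − 1 (the fixed subspace of M). -/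
/-!
The transpose of a symplectic matrix is conjugate to its inverse, so the multiset of eigenvalues
is stable under `z ↦ z⁻¹`. Writing `z = exp(2πi a)` with `0 ≤ a < 1`, the weights of `z` and
`z⁻¹` add up to an integer in `[0, 2)`: `0` if `z = 1` and `1` otherwise. Hence twice the weight
sum is the number of eigenvalues different from `1`, and since a matrix of finite order is
diagonalizable, the multiplicity of the eigenvalue `1` is the dimension of the fixed space.
-/

open scoped Matrix

open Polynomial Complex Set

theorem Polynomial.reverse_X {R : Type*} [Semiring R] : (X : R[X]).reverse = 1 := by
  have := reverse_mul_X (C (1 : R))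
  rwa [reverse_C, C_1, one_mul] at this

theorem Polynomial.roots_reverse {K : Type*} [Field K] {p : K[X]} (hp : p.Splits)
    (h0 : p.coeff 0 ≠ 0) : p.reverse.roots = p.roots.map (·⁻¹) := by
  induction hp using Submonoid.closure_induction with
  | mem q hq =>
    obtain ⟨c, rfl⟩ | ⟨a, rfl⟩ := hq
    · simp
    · have ha : a ≠ 0 := by simpa using h0
      have hrev : (X + C a).reverse = C a * (X - C (-a)⁻¹) := by
        rw [reverse_add_C, reverse_X, natDegree_X, pow_one, mul_sub, ← C_mul, inv_neg, mul_neg,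
          mul_inv_cancel₀ ha, C_neg, C_1, sub_neg_eq_add, add_comm]
      rw [hrev, roots_C_mul _ ha, roots_X_sub_C, ← sub_neg_eq_add, ← C_neg, roots_X_sub_C]
      simp
  | one => simpa using congrArg roots (reverse_C (1 : K))
  | mul q r _ _ hq hr =>
    rw [mul_coeff_zero] at h0
    have hq0 : q.coeff 0 ≠ 0 := left_ne_zero_of_mul h0
    have hr0 : r.coeff 0 ≠ 0 := right_ne_zero_of_mul h0
    have hq' : q ≠ 0 := fun h => hq0 (by rw [h, coeff_zero])
    have hr' : r ≠ 0 := fun h => hr0 (by rw [h, coeff_zero])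
    rw [reverse_mul_of_domain, roots_mul (mul_ne_zero (by rwa [Ne, reverse_eq_zero])
      (by rwa [Ne, reverse_eq_zero])), roots_mul (mul_ne_zero hq' hr'), hq hq0, hr hr0,
      Multiset.map_add]

namespace Matrix

theorem roots_charpoly_inv {K n : Type*} [Field K] [Fintype n] [DecidableEq n]
    {A : Matrix n n K} (hA : IsUnit A) (hs : A.charpoly.Splits) :
    A⁻¹.charpoly.roots = A.charpoly.roots.map (·⁻¹) := by
  have hdet : A.det ≠ 0 := ((isUnit_iff_isUnit_det A).mp hA).ne_zero
  have h0 : A.charpoly.coeff 0 ≠ 0 := by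
    intro h
    apply hdet
    rw [det_eq_sign_charpoly_coeff, h, mul_zero]
  have hC : ((-1) ^ Fintype.card n * C A.det⁻¹ : K[X]) =
      C ((-1) ^ Fintype.card n * A.det⁻¹) := by
    simp
  rw [charpoly_inv A hA, ← reverse_charpoly, Ring.inverse_eq_inv', hC,
    roots_C_mul _ (by simpa using hdet), roots_reverse hs h0]

section Symplectic

variable {R n : Type*} [CommRing R] [Fintype n] [DecidableEq n] {J M : Matrix n n R}

theorem isUnit_fromBlocks_zero_one_neg_one_zero :
    IsUnit (fromBlocks 0 1 (-1) 0 : Matrix (n ⊕ n) (n ⊕ n) R) := by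
  refine .of_mul_eq_one (fromBlocks 0 (-1) 1 0) ?_
  rw [fromBlocks_multiply, ← fromBlocks_one]
  simp

theorem isUnit_of_transpose_mul_mul_eq (hJ : IsUnit J) (hM : Mᵀ * J * M = J) : IsUnit M := by
  have hdet : M.det * M.det * J.det = 1 * J.det := by
    nth_rw 1 [one_mul, mul_right_comm, ← det_transpose M]
    rw [← det_mul, ← det_mul, hM]
  rw [isUnit_iff_isUnit_det]
  exact .of_mul_eq_one _ (((isUnit_iff_isUnit_det J).mp hJ).mul_right_cancel hdet)

theorem charpoly_inv_of_transpose_mul_mul_eq (hJ : IsUnit J) (hM : Mᵀ * J * M = J) :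
    M⁻¹.charpoly = M.charpoly := by
  have hMT : Mᵀ = J * M⁻¹ * J⁻¹ := calc
    Mᵀ = Mᵀ * J * M * M⁻¹ * J⁻¹ := by
      rw [mul_nonsing_inv_cancel_right _ _
        ((isUnit_iff_isUnit_det M).mp (isUnit_of_transpose_mul_mul_eq hJ hM)),
        mul_nonsing_inv_cancel_right _ _ ((isUnit_iff_isUnit_det J).mp hJ)]
    _ = J * M⁻¹ * J⁻¹ := by rw [hM]
  rw [← charpoly_transpose M, hMT]
  exact (charpoly_units_conj hJ.unit M⁻¹).symm

end Symplectic

end Matrix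

namespace Module.End

variable {K V : Type*} [Field K] [AddCommGroup V] [Module K V]

theorem isSemisimple_of_pow_eq_one {f : End K V} {m : ℕ} (hm : (m : K) ≠ 0) (hf : f ^ m = 1) :
    f.IsSemisimple :=
  isSemisimple_of_squarefree_aeval_eq_zero
    (separable_X_pow_sub_C 1 hm one_ne_zero).squarefree (by simp [hf])

theorem IsSemisimple.count_roots_charpoly [FiniteDimensional K V] [DecidableEq K] {f : End K V}
    (hf : f.IsSemisimple) (μ : K) :
    f.charpoly.roots.count μ = Module.finrank K (f.eigenspace μ) := by
  rw [count_roots, ← LinearMap.finrank_maxGenEigenspace_eq,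
    hf.isFinitelySemisimple.maxGenEigenspace_eq_eigenspace]

end Module.End

theorem Matrix.count_one_roots_charpoly_of_pow_eq_one {K n : Type*} [Field K] [DecidableEq K]
    [Fintype n] [DecidableEq n] {M : Matrix n n K} {m : ℕ} (hm : (m : K) ≠ 0) (hM : M ^ m = 1) :
    M.charpoly.roots.count 1 = Module.finrank K (LinearMap.ker (M - 1).mulVecLin) := by
  have hss : Module.End.IsSemisimple (toLin' M) :=
    Module.End.isSemisimple_of_pow_eq_one hm (by
      change toLinAlgEquiv' M ^ m = 1
      rw [← map_pow, hM, map_one])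
  rw [← charpoly_toLin', hss.count_roots_charpoly, Module.End.eigenspace_def, one_smul,
    ← toLin'_apply', map_sub, toLin'_one]
  rfl

theorem exists_int_eq_of_cexp_eq_one {t : ℝ} (h : cexp (2 * Real.pi * I * t) = 1) :
    ∃ k : ℤ, t = k := by
  obtain ⟨k, hk⟩ := Complex.exp_eq_one_iff.mp h
  have h2πI : (2 * Real.pi * I : ℂ) ≠ 0 := by simp [Real.pi_ne_zero]
  exact ⟨k, by exact_mod_cast mul_left_cancel₀ h2πI (hk.trans (mul_comm _ _))⟩

theorem eq_zero_of_cexp_eq_one_of_mem_Ico {t : ℝ} (ht : t ∈ Ico 0 1)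
    (h : cexp (2 * Real.pi * I * t) = 1) : t = 0 := by
  obtain ⟨k, rfl⟩ := exists_int_eq_of_cexp_eq_one h
  obtain ⟨h0, h1⟩ := ht
  norm_cast at h0 h1 ⊢
  omega

theorem add_eq_ite_of_cexp_mul_cexp_eq_one {x y : ℝ} (hx : x ∈ Ico 0 1) (hy : y ∈ Ico 0 1)
    (hxy : cexp (2 * Real.pi * I * x) * cexp (2 * Real.pi * I * y) = 1) :
    x + y = if cexp (2 * Real.pi * I * x) = 1 then 0 else 1 := by
  obtain ⟨k, hk⟩ := exists_int_eq_of_cexp_eq_one (t := x + y) (by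
    rwa [ofReal_add, mul_add, Complex.exp_add])
  split_ifs with h
  · rw [h, one_mul] at hxy
    rw [eq_zero_of_cexp_eq_one_of_mem_Ico hx h, eq_zero_of_cexp_eq_one_of_mem_Ico hy hxy, add_zero]
  · have hx0 : x ≠ 0 := by rintro rfl; simp at h
    have hpos : (0 : ℤ) < k := by
      exact_mod_cast hk ▸ (by linarith [lt_of_le_of_ne hx.1 (Ne.symm hx0), hy.1] : 0 < x + y)
    have hlt : k < 2 := by exact_mod_cast hk ▸ (by linarith [hx.2, hy.2] : x + y < 2)
    rw [hk, show k = 1 by omega, Int.cast_one]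

namespace Multiset

variable {α : Type*} [DecidableEq α]

theorem sum_map_ite_eq_card_sub_count (S : Multiset α) (a : α) :
    (S.map fun x => if x = a then (0 : ℝ) else 1).sum = card S - S.count a := by
  induction S using Multiset.induction with
  | empty => simp
  | cons b s ih =>
    rw [map_cons, sum_cons, ih, card_cons, count_cons]
    by_cases hb : b = a
    · simp [hb]
    · simp [hb, Ne.symm hb]
      ring

theorem sum_map_eq_half_card_sub_count [Inv α] {S : Multiset α} (hS : S.map (·⁻¹) = S) (a : α)
    (w : α → ℝ) (h : ∀ x ∈ S, w x + w x⁻¹ = if x = a then 0 else 1) :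
    (S.map w).sum = (card S - count a S) / 2 := by
  have hinv : (S.map fun x => w x⁻¹).sum = (S.map w).sum := by
    conv_rhs => rw [← hS, map_map]
    rfl
  calc (S.map w).sum = ((S.map w).sum + (S.map fun x => w x⁻¹).sum) / 2 := by rw [hinv]; ring
    _ = (S.map fun x => if x = a then (0 : ℝ) else 1).sum / 2 := by
      rw [← sum_map_add, map_congr rfl h]
    _ = (card S - count a S) / 2 := by rw [sum_map_ite_eq_card_sub_count]

end Multiset

theorem sum_weights_eq_half_codim_fixed_general
    (n : ℕ)
    (J M : Matrix (Fin n ⊕ Fin n) (Fin n ⊕ Fin n) ℂ)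
    (hJ : J = Matrix.fromBlocks 0 1 (-1) 0)
    (hM : Mᵀ * J * M = J)
    (m : ℕ) (hm : 1 ≤ m) (hord : M ^ m = 1)
    (a : ℂ → ℝ)
    (ha : ∀ lam ∈ M.charpoly.roots,
      0 ≤ a lam ∧ a lam < 1 ∧
        Complex.exp (2 * (Real.pi : ℂ) * Complex.I * (a lam : ℂ)) = lam) :
    (M.charpoly.roots.map a).sum =
      (2 * (n : ℝ) -
        (Module.finrank ℂ (LinearMap.ker (Matrix.mulVecLin (M - 1))) : ℝ)) / 2 := by
  classical
  have hJu : IsUnit J := hJ ▸ Matrix.isUnit_fromBlocks_zero_one_neg_one_zero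
  have hS : M.charpoly.roots.map (·⁻¹) = M.charpoly.roots := by
    rw [← Matrix.roots_charpoly_inv (Matrix.isUnit_of_transpose_mul_mul_eq hJu hM)
      (IsAlgClosed.splits _), Matrix.charpoly_inv_of_transpose_mul_mul_eq hJu hM]
  have hw : ∀ z ∈ M.charpoly.roots, a z + a z⁻¹ = if z = 1 then 0 else 1 := by
    intro z hz
    obtain ⟨hx0, hx1, hxz⟩ := ha z hz
    obtain ⟨hy0, hy1, hyz⟩ := ha z⁻¹ (hS ▸ Multiset.mem_map_of_mem _ hz)
    have hz0 : z ≠ 0 := hxz ▸ Complex.exp_ne_zero _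
    simpa only [hxz] using add_eq_ite_of_cexp_mul_cexp_eq_one ⟨hx0, hx1⟩ ⟨hy0, hy1⟩
      (by rw [hxz, hyz, mul_inv_cancel₀ hz0])
  have hcard : (Multiset.card M.charpoly.roots : ℝ) = 2 * n := by
    rw [← (IsAlgClosed.splits _).natDegree_eq_card_roots, Matrix.charpoly_natDegree_eq_dim,
      Fintype.card_sum, Fintype.card_fin, Nat.cast_add, two_mul]
  rw [Multiset.sum_map_eq_half_card_sub_count hS 1 a hw, hcard,
    Matrix.count_one_roots_charpoly_of_pow_eq_one (by exact_mod_cast (by omega : m ≠ 0)) hord]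

/-- Let `J` be the standard symplectic `2n × 2n` matrix and `M` a
complex symplectic matrix (`Mᵀ J M = J`) of finite order.  Writing each root `λ` of
the characteristic polynomial of `M` as `λ = exp(2πi·a(λ))` with `0 ≤ a(λ) < 1`, the
sum of the weights `a(λ)` over the roots (with multiplicity) equals `(2n − d)/2`,
where `d` is the dimension of the fixed subspace `ker(M − 1)`. -/
theorem sum_weights_eq_half_codim_fixed
    (n : ℕ) (hn : 1 ≤ n)
    (J M : Matrix (Fin n ⊕ Fin n) (Fin n ⊕ Fin n) ℂ)
    (hJ : J = Matrix.fromBlocks 0 1 (-1) 0)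
    (hM : Mᵀ * J * M = J)
    (m : ℕ) (hm : 1 ≤ m) (hord : M ^ m = 1)
    (a : ℂ → ℝ)
    (ha : ∀ lam ∈ M.charpoly.roots,
      0 ≤ a lam ∧ a lam < 1 ∧
        Complex.exp (2 * (Real.pi : ℂ) * Complex.I * (a lam : ℂ)) = lam) :
    (M.charpoly.roots.map a).sum =
      (2 * (n : ℝ) -
        (Module.finrank ℂ (LinearMap.ker (Matrix.mulVecLin (M - 1))) : ℝ)) / 2 :=
  sum_weights_eq_half_codim_fixed_general n J M hJ hM m hm hord a ha
end

section
/- Let M and N be the 3 × 3 complex matrices with M·e₁ = e₂, M·e₂ = M·e₃ = 0 and N·e₁ = e₃, N·e₂ = N·e₃ = 0 (in matrix form, M has a single nonzero entry 1 in row 2, column 1, and N has a single nonzero entry 1 in row 3, column 1). Then: (1) M and N commute and are nilpotent; (2) there exists a vector v ∈ ℂ³ such that the ℂ-linear span of the set {Mⁱ·Nʲ·v : i, j ∈ ℕ} is all of ℂ³; (3) for every vector v ∈ ℂ³, the ℂ-linear span of {(Mᵀ)ⁱ·(Nᵀ)ʲ·v : i, j ∈ ℕ} is a proper subspace of ℂ³.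 -/
open scoped Matrix

private lemma pow_three_cases {A : Matrix (Fin 3) (Fin 3) ℂ} (h : A * A = 0) :
    ∀ i, A ^ i = 1 ∨ A ^ i = A ∨ A ^ i = 0
  | 0 => Or.inl (pow_zero A)
  | 1 => Or.inr (Or.inl (pow_one A))
  | (i+2) => Or.inr (Or.inr (by rw [pow_succ, pow_succ, mul_assoc, h, mul_zero]))

/-- Let `M, N` be the `3 × 3` complex matrices with single nonzero
entries `M₂₁ = 1` and `N₃₁ = 1` (so `M e₁ = e₂`, `N e₁ = e₃` and all other basis vectors
map to `0`).  Then (1) `M` and `N` commute and are nilpotent; (2) there is a vector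
`v ∈ ℂ³` such that the vectors `Mⁱ Nʲ v` span `ℂ³`; (3) for every `v ∈ ℂ³` the span of
the vectors `(Mᵀ)ⁱ (Nᵀ)ʲ v` is a proper subspace of `ℂ³`. -/
theorem spanning_pair_whose_transpose_fails_spanning
    (M N : Matrix (Fin 3) (Fin 3) ℂ)
    (hM : M = !![0,0,0; 1,0,0; 0,0,0])
    (hN : N = !![0,0,0; 0,0,0; 1,0,0]) :
    (M * N = N * M ∧ IsNilpotent M ∧ IsNilpotent N) ∧
    (∃ v : Fin 3 → ℂ,
      Submodule.span ℂ {w : Fin 3 → ℂ | ∃ i j : ℕ, w = (M ^ i * N ^ j).mulVec v} = ⊤) ∧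
    (∀ v : Fin 3 → ℂ,
      Submodule.span ℂ {w : Fin 3 → ℂ | ∃ i j : ℕ, w = (Mᵀ ^ i * Nᵀ ^ j).mulVec v} ≠ ⊤) := by
  subst hM hN
  set M : Matrix (Fin 3) (Fin 3) ℂ := !![0,0,0; 1,0,0; 0,0,0] with hM
  set N : Matrix (Fin 3) (Fin 3) ℂ := !![0,0,0; 0,0,0; 1,0,0] with hN
  have hMM : M * M = 0 := by
    ext i j; fin_cases i <;> fin_cases j <;> simp [hM, Matrix.mul_apply, Fin.sum_univ_three]
  have hNN : N * N = 0 := by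
    ext i j; fin_cases i <;> fin_cases j <;> simp [hM, hN, Matrix.mul_apply, Fin.sum_univ_three]
  have hMN : M * N = 0 := by
    ext i j; fin_cases i <;> fin_cases j <;> simp [hM, hN, Matrix.mul_apply, Fin.sum_univ_three]
  have hNM : N * M = 0 := by
    ext i j; fin_cases i <;> fin_cases j <;> simp [hM, hN, Matrix.mul_apply, Fin.sum_univ_three]
  have hTT : Mᵀ * Mᵀ = 0 := by rw [← Matrix.transpose_mul, hMM, Matrix.transpose_zero]
  have hTT' : Nᵀ * Nᵀ = 0 := by rw [← Matrix.transpose_mul, hNN, Matrix.transpose_zero]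
  have hTMN : Mᵀ * Nᵀ = 0 := by rw [← Matrix.transpose_mul, hNM, Matrix.transpose_zero]
  refine ⟨⟨hMN.trans hNM.symm, ⟨2, by rw [pow_two, hMM]⟩, ⟨2, by rw [pow_two, hNN]⟩⟩, ?_, ?_⟩
  · -- spanning part with v = e₀
    refine ⟨![1,0,0], ?_⟩
    have h0 : (![1,0,0] : Fin 3 → ℂ) ∈ {w : Fin 3 → ℂ | ∃ i j : ℕ, w = (M ^ i * N ^ j).mulVec ![1,0,0]} := by
      exact ⟨0, 0, by simp⟩
    have h1 : (![0,1,0] : Fin 3 → ℂ) ∈ {w : Fin 3 → ℂ | ∃ i j : ℕ, w = (M ^ i * N ^ j).mulVec ![1,0,0]} := by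
      refine ⟨1, 0, ?_⟩
      simp only [pow_one, pow_zero, mul_one]
      funext i; fin_cases i <;> simp [hM, Matrix.mulVec, dotProduct, Fin.sum_univ_three]
    have h2 : (![0,0,1] : Fin 3 → ℂ) ∈ {w : Fin 3 → ℂ | ∃ i j : ℕ, w = (M ^ i * N ^ j).mulVec ![1,0,0]} := by
      refine ⟨0, 1, ?_⟩
      simp only [pow_one, pow_zero, one_mul]
      funext i; fin_cases i <;> simp [hN, Matrix.mulVec, dotProduct, Fin.sum_univ_three]
    rw [eq_top_iff]
    intro x _
    have hx : x = x 0 • ![1,0,0] + x 1 • ![0,1,0] + x 2 • ![0,0,1] := by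
      funext i; fin_cases i <;> simp
    rw [hx]
    exact add_mem (add_mem (Submodule.smul_mem _ _ (Submodule.subset_span h0))
      (Submodule.smul_mem _ _ (Submodule.subset_span h1)))
      (Submodule.smul_mem _ _ (Submodule.subset_span h2))
  · -- transpose part
    intro v htop
    -- every element of the set is v, Mᵀv, Nᵀv, or 0
    have hmem : ∀ w ∈ {w : Fin 3 → ℂ | ∃ i j : ℕ, w = (Mᵀ ^ i * Nᵀ ^ j).mulVec v},
        w = v ∨ w = Mᵀ.mulVec v ∨ w = Nᵀ.mulVec v ∨ w = 0 := by
      rintro w ⟨i, j, rfl⟩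
      rcases pow_three_cases hTT i with hi | hi | hi <;>
        rcases pow_three_cases hTT' j with hj | hj | hj <;>
          simp [hi, hj, hTMN, Matrix.zero_mulVec]
    have hMv : Mᵀ.mulVec v = ![v 1, 0, 0] := by
      funext i; fin_cases i <;>
        simp [hM, Matrix.mulVec, dotProduct, Fin.sum_univ_three, Matrix.transpose_apply]
    have hNv : Nᵀ.mulVec v = ![v 2, 0, 0] := by
      funext i; fin_cases i <;>
        simp [hN, Matrix.mulVec, dotProduct, Fin.sum_univ_three, Matrix.transpose_apply]
    -- a nonzero linear functional vanishing on the set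
    by_cases hv : v 1 = 0 ∧ v 2 = 0
    · -- functional w ↦ w 1
      set f : (Fin 3 → ℂ) →ₗ[ℂ] ℂ := LinearMap.proj 1 with hf
      have hker : Submodule.span ℂ {w : Fin 3 → ℂ | ∃ i j : ℕ, w = (Mᵀ ^ i * Nᵀ ^ j).mulVec v}
          ≤ LinearMap.ker f := by
        rw [Submodule.span_le]
        intro w hw
        rcases hmem w hw with rfl | rfl | rfl | rfl <;>
          simp [hf, hMv, hNv, hv.1, hv.2, LinearMap.mem_ker]
      rw [htop] at hker
      have : f ![0,1,0] = 0 := hker (Submodule.mem_top)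
      simp [hf] at this
    · -- functional w ↦ v 2 * w 1 - v 1 * w 2
      set f : (Fin 3 → ℂ) →ₗ[ℂ] ℂ := v 2 • LinearMap.proj 1 - v 1 • LinearMap.proj 2 with hf
      have hker : Submodule.span ℂ {w : Fin 3 → ℂ | ∃ i j : ℕ, w = (Mᵀ ^ i * Nᵀ ^ j).mulVec v}
          ≤ LinearMap.ker f := by
        rw [Submodule.span_le]
        intro w hw
        rcases hmem w hw with rfl | rfl | rfl | rfl <;>
          simp [hf, hMv, hNv, LinearMap.mem_ker, mul_comm]
      rw [htop] at hker
      rcases (not_and_or.1 hv) with h1 | h2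
      · have : f ![0,0,1] = 0 := hker (Submodule.mem_top)
        simp [hf] at this
        exact h1 this
      · have : f ![0,1,0] = 0 := hker (Submodule.mem_top)
        simp [hf] at this
        exact h2 this
end

section
/- Let M and N be the 4 × 4 complex matrices given (with rows and columns indexed 1–4) by: M has entries 1 in positions (1,2) and (2,3) and 0 elsewhere; N has entries 1 in positions (1,2), (2,3), and (4,3) and 0 elsewhere. Then there does not exist an invertible 4 × 4 complex matrix Φ satisfying Φᵀ = −Φ, Φ·M = −Mᵀ·Φ, and Φ·N = −Nᵀ·Φ. -/
open scoped Matrix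

/-- Let `M, N` be the `4 × 4` complex matrices with entries `1` at
positions `(1,2), (2,3)` (for `M`) and `(1,2), (2,3), (4,3)` (for `N`), and `0`
elsewhere.  Then there is no invertible skew-symmetric `Φ` with `Φ M = −Mᵀ Φ` and
`Φ N = −Nᵀ Φ`. -/
theorem no_symplectic_structure_for_degenerate_pair
    (M N : Matrix (Fin 4) (Fin 4) ℂ)
    (hM : M = !![0,1,0,0; 0,0,1,0; 0,0,0,0; 0,0,0,0])
    (hN : N = !![0,1,0,0; 0,0,1,0; 0,0,0,0; 0,0,1,0]) :
    ¬ ∃ Φ : Matrix (Fin 4) (Fin 4) ℂ,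
        IsUnit Φ ∧ Φᵀ = -Φ ∧ Φ * M = -(Mᵀ * Φ) ∧ Φ * N = -(Nᵀ * Φ) := by
  rintro ⟨Φ, hU, hskew, hΦM, -⟩
  subst hM
  -- entrywise consequences of Φ M = -(Mᵀ Φ)
  have h02 := congrFun (congrFun hΦM 0) 2
  have h21 := congrFun (congrFun hΦM 2) 1
  have h31 := congrFun (congrFun hΦM 3) 1
  simp [Matrix.mul_apply, Fin.sum_univ_four, Matrix.vecHead, Matrix.vecTail,
    Matrix.transpose_apply, Function.comp] at h02 h21 h31
  -- skew symmetry entrywise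
  have hs : ∀ i j, Φ j i = -Φ i j := by
    intro i j
    have := congrFun (congrFun hskew i) j
    simpa [Matrix.transpose_apply] using this
  -- first row of Φ vanishes
  have h00 : Φ 0 0 = 0 := by have := hs 0 0; linear_combination this / 2
  have h01 : Φ 0 1 = 0 := h02
  have h02' : Φ 0 2 = 0 := by linear_combination hs 2 0 - h21 + (hs 1 1) / 2
  have h03 : Φ 0 3 = 0 := by linear_combination hs 3 0 - h31
  -- hence det Φ = 0, contradicting invertibility
  have hdet : Φ.det = 0 := by
    apply Matrix.det_eq_zero_of_row_eq_zero 0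
    intro j
    fin_cases j <;> assumption
  have := hU.map (Matrix.detMonoidHom (n := Fin 4) (R := ℂ))
  simp [Matrix.detMonoidHom, hdet] at this
end
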